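/- Let α be a finite set, f and q pmfs on α, M ≥ 1 a natural number, and δ a real number with 0 ≤ δ ≤ H(q‖f). If X₁,…,X_M are i.i.d. with common pmf f and p̂ denotes their empirical distribution, then Pr(H(p̂‖q) ≤ δ) ≤ (M+1)^{|α|} · exp(−2·M·(H(q‖f) − δ)²). -/

import Mathlib

open Finset

/-- `p` is a probability mass function on the finite type `α`. -/
def IsPmf {α : Type*} [Fintype α] (p : α → ℝ) : Prop :=
  (∀ a, 0 ≤ p a) ∧ ∑ a, p a = 1

/-- Squared Hellinger divergence between pmfs on a finite type. -/
noncomputable def hellingerSq {α : Type*} [Fintype α] (p q : α → ℝ) : ℝ :=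
  (1 / 2) * ∑ a, (Real.sqrt (p a) - Real.sqrt (q a)) ^ 2

/-- Hellinger distance between pmfs on a finite type. -/
noncomputable def hellinger {α : Type*} [Fintype α] (p q : α → ℝ) : ℝ :=
  Real.sqrt (hellingerSq p q)

/-- Empirical distribution of the sample `x = (x₁, …, x_M)`. -/
noncomputable def empDist {α : Type*} [Fintype α] [DecidableEq α] {M : ℕ}
    (x : Fin M → α) (a : α) : ℝ :=
  ((Finset.univ.filter fun i => x i = a).card : ℝ) / M

/-! Method of types. With `n_a = #{i | x i = a}` and `p̂ = n / M`, the inequality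
`t ≤ exp (t - 1)` at `t = √(f a / p̂ a)`, raised to the power `2 n_a` and multiplied over `a`,
gives `∏ i, f (x i) ≤ exp (-2M H²(p̂‖f)) * ∏ i, p̂ (x i)`. On the event `H(p̂‖q) ≤ δ` the
triangle inequality gives `H(p̂‖f) ≥ H(q‖f) - δ ≥ 0`. Grouping the samples by their empirical
distribution `P`, each group has weight at most `∑ x, ∏ i, P (x i) = (∑ a, P a) ^ M = 1`, and
there are at most `(M + 1) ^ |α|` empirical distributions. -/

open Real

lemma pow_le_exp_mul_pow {k : ℕ} {M p y : ℝ} (hp : 0 ≤ p) (hy : 0 ≤ y) (hk : (k : ℝ) = M * p) :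
    y ^ k ≤ exp (2 * M * (√(p * y) - p)) * p ^ k := by
  rcases hp.eq_or_lt with rfl | hp
  · obtain rfl : k = 0 := by exact_mod_cast hk.trans (mul_zero M)
    simp
  set t := √(y / p)
  have hy_eq : y = p * t ^ 2 := by
    rw [Real.sq_sqrt (by positivity)]; field_simp
  have hsqrt : √(p * y) = p * t := by
    rw [hy_eq, show p * (p * t ^ 2) = (p * t) * (p * t) by ring]
    exact Real.sqrt_mul_self (by positivity)
  have ht : t ≤ exp (t - 1) := by linarith [add_one_le_exp (t - 1)]
  calc y ^ k = t ^ (2 * k) * p ^ k := by rw [hy_eq, pow_mul, mul_pow, mul_comm]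
    _ ≤ exp (t - 1) ^ (2 * k) * p ^ k := by gcongr
    _ = exp (2 * M * (√(p * y) - p)) * p ^ k := by
      rw [← Real.exp_nat_mul, hsqrt, Nat.cast_mul, hk]
      ring_nf

lemma hellingerSq_eq_one_sub_sum_sqrt {α : Type*} [Fintype α] {p q : α → ℝ} (hp : IsPmf p)
    (hq : IsPmf q) : hellingerSq p q = 1 - ∑ a, √(p a * q a) := by
  have hterm (a : α) : (√(p a) - √(q a)) ^ 2 = p a + q a - 2 * √(p a * q a) := by
    rw [sub_sq, Real.sq_sqrt (hp.1 a), Real.sq_sqrt (hq.1 a), Real.sqrt_mul (hp.1 a)]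
    ring
  simp only [hellingerSq, hterm, Finset.sum_sub_distrib, Finset.sum_add_distrib, hp.2, hq.2,
    ← Finset.mul_sum]
  ring

lemma prod_pow_le_exp_hellingerSq_mul_prod_pow {α : Type*} [Fintype α] {p f : α → ℝ}
    (hp : IsPmf p) (hf : IsPmf f) (M : ℝ) (n : α → ℕ) (hn : ∀ a, (n a : ℝ) = M * p a) :
    ∏ a, f a ^ n a ≤ exp (-2 * M * hellingerSq p f) * ∏ a, p a ^ n a := by
  have hexp : exp (-2 * M * hellingerSq p f) = ∏ a, exp (2 * M * (√(p a * f a) - p a)) := by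
    rw [← Real.exp_sum, hellingerSq_eq_one_sub_sum_sqrt hp hf, ← Finset.mul_sum,
      Finset.sum_sub_distrib, hp.2]
    ring_nf
  rw [hexp, ← Finset.prod_mul_distrib]
  exact Finset.prod_le_prod (fun a _ => pow_nonneg (hf.1 a) _)
    (fun a _ => pow_le_exp_mul_pow (hp.1 a) (hf.1 a) (hn a))

lemma hellinger_eq_dist {α : Type*} [Fintype α] (p q : α → ℝ) :
    hellinger p q = √(1 / 2) * dist (WithLp.toLp 2 fun a => √(p a) : EuclideanSpace ℝ α)
      (WithLp.toLp 2 fun a => √(q a)) := by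
  rw [hellinger, hellingerSq, Real.sqrt_mul (by norm_num), EuclideanSpace.dist_eq]
  simp [Real.dist_eq, sq_abs]

lemma hellinger_comm {α : Type*} [Fintype α] (p q : α → ℝ) :
    hellinger p q = hellinger q p := by
  rw [hellinger_eq_dist, hellinger_eq_dist, dist_comm]

lemma hellinger_triangle {α : Type*} [Fintype α] (p q r : α → ℝ) :
    hellinger p r ≤ hellinger p q + hellinger q r := by
  simp only [hellinger_eq_dist, ← mul_add]
  gcongr
  exact dist_triangle _ _ _

lemma sum_prod_le_one {ι α : Type*} [Fintype ι] [DecidableEq ι] [Fintype α] {p : α → ℝ}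
    (hp : IsPmf p) (s : Finset (ι → α)) : ∑ x ∈ s, ∏ i, p (x i) ≤ 1 :=
  calc ∑ x ∈ s, ∏ i, p (x i) ≤ ∑ x : ι → α, ∏ i, p (x i) :=
        Finset.sum_le_univ_sum_of_nonneg fun x => Finset.prod_nonneg fun i _ => hp.1 (x i)
    _ = 1 := by rw [← Fintype.prod_sum]; simp [hp.2]

section Empirical

variable {α : Type*} [Fintype α] [DecidableEq α] {M : ℕ}

lemma sum_card_filter_eq (x : Fin M → α) : ∑ a, #{i | x i = a} = M := by
  rw [← Finset.card_eq_sum_card_fiberwise fun i _ => Finset.mem_univ (x i), Finset.card_univ,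
    Fintype.card_fin]

lemma natCast_mul_empDist (hM : M ≠ 0) (x : Fin M → α) (a : α) :
    (M : ℝ) * empDist x a = #{i | x i = a} := by
  rw [empDist]; field_simp

lemma isPmf_empDist (hM : M ≠ 0) (x : Fin M → α) : IsPmf (empDist x) := by
  refine ⟨fun a => by rw [empDist]; positivity, ?_⟩
  rw [← mul_right_inj' (Nat.cast_ne_zero.2 hM : (M : ℝ) ≠ 0), Finset.mul_sum]
  simp only [natCast_mul_empDist hM]
  exact_mod_cast (sum_card_filter_eq x).trans (mul_one M).symm

lemma prod_comp_eq_prod_pow_card (x : Fin M → α) (g : α → ℝ) :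
    ∏ i, g (x i) = ∏ a, g a ^ #{i | x i = a} := by
  simp_rw [← Finset.prod_fiberwise' Finset.univ x g, Finset.prod_const]

lemma prod_le_exp_hellingerSq_empDist_mul {f : α → ℝ} (hf : IsPmf f) (hM : M ≠ 0)
    (x : Fin M → α) :
    ∏ i, f (x i) ≤ exp (-2 * M * hellingerSq (empDist x) f) * ∏ i, empDist x (x i) := by
  simp only [prod_comp_eq_prod_pow_card x]
  exact prod_pow_le_exp_hellingerSq_mul_prod_pow (isPmf_empDist hM x) hf M _
    fun a => (natCast_mul_empDist hM x a).symm

lemma card_image_empDist_le :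
    #(Finset.univ.image (empDist (α := α) (M := M))) ≤ (M + 1) ^ Fintype.card α := by
  calc #(Finset.univ.image empDist)
      ≤ #(Finset.univ.image fun (c : α → Fin (M + 1)) a => (c a : ℝ) / M) := by
        refine Finset.card_le_card fun P hP => ?_
        obtain ⟨x, -, rfl⟩ := Finset.mem_image.1 hP
        refine Finset.mem_image.2 ⟨fun a => ⟨#{i | x i = a}, ?_⟩, Finset.mem_univ _, rfl⟩
        exact Nat.lt_succ_of_le ((Finset.card_filter_le _ _).trans_eq (Finset.card_fin M))
    _ ≤ (M + 1) ^ Fintype.card α := by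
        simpa using Finset.card_image_le (s := Finset.univ)
          (f := fun (c : α → Fin (M + 1)) a => (c a : ℝ) / M)

lemma sum_prod_empDist_le (hM : M ≠ 0) :
    ∑ x : Fin M → α, ∏ i, empDist x (x i) ≤ ((M : ℝ) + 1) ^ Fintype.card α := by
  rw [← Finset.sum_fiberwise_of_maps_to (t := Finset.univ.image empDist)
    fun x _ => Finset.mem_image_of_mem empDist (Finset.mem_univ x)]
  calc ∑ P ∈ Finset.univ.image empDist, ∑ x with empDist x = P, ∏ i, empDist x (x i)
      ≤ ∑ P ∈ Finset.univ.image (empDist (α := α) (M := M)), 1 := by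
        refine Finset.sum_le_sum fun P hP => ?_
        obtain ⟨x₀, -, rfl⟩ := Finset.mem_image.1 hP
        rw [Finset.sum_congr rfl fun x hx => by rw [(Finset.mem_filter.1 hx).2]]
        exact sum_prod_le_one (isPmf_empDist hM x₀) _
    _ ≤ ((M : ℝ) + 1) ^ Fintype.card α := by
        rw [Finset.sum_const, nsmul_one]
        exact_mod_cast card_image_empDist_le

end Empirical

theorem prob_hellinger_emp_le_general {α : Type*} [Fintype α] [DecidableEq α]
    (f q : α → ℝ) (hf : IsPmf f) (M : ℕ) (hM : 1 ≤ M)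
    (δ : ℝ) (hδ : δ ≤ hellinger q f) :
    (∑ x : Fin M → α,
        Set.indicator {x : Fin M → α | hellinger (empDist x) q ≤ δ}
          (fun x => ∏ i, f (x i)) x) ≤
      ((M : ℝ) + 1) ^ (Fintype.card α) *
        Real.exp (-2 * M * (hellinger q f - δ) ^ 2) := by
  have hM0 : M ≠ 0 := by omega
  set E := exp (-2 * M * (hellinger q f - δ) ^ 2)
  have hweight (x : Fin M → α) : 0 ≤ ∏ i, empDist x (x i) :=
    Finset.prod_nonneg fun i _ => (isPmf_empDist hM0 x).1 (x i)
  have hpoint (x : Fin M → α) (hx : hellinger (empDist x) q ≤ δ) :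
      ∏ i, f (x i) ≤ E * ∏ i, empDist x (x i) := by
    have hfar : hellinger q f - δ ≤ hellinger (empDist x) f := by
      linarith [hellinger_triangle q (empDist x) f, hellinger_comm q (empDist x)]
    have hsq : (hellinger q f - δ) ^ 2 ≤ hellingerSq (empDist x) f :=
      (Real.le_sqrt (sub_nonneg.2 hδ) (by rw [hellingerSq]; positivity)).1 hfar
    refine (prod_le_exp_hellingerSq_empDist_mul hf hM0 x).trans
      (mul_le_mul_of_nonneg_right (exp_le_exp.2 ?_) (hweight x))
    nlinarith
  calc _ ≤ ∑ x : Fin M → α, E * ∏ i, empDist x (x i) :=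
        Finset.sum_le_sum fun x _ => Set.indicator_apply_le' (hpoint x)
          fun _ => mul_nonneg (exp_pos _).le (hweight x)
    _ = E * ∑ x : Fin M → α, ∏ i, empDist x (x i) := (Finset.mul_sum _ _ _).symm
    _ ≤ E * ((M : ℝ) + 1) ^ Fintype.card α := by gcongr; exact sum_prod_empDist_le hM0
    _ = _ := mul_comm _ _

/-- If `X₁, …, X_M` are i.i.d. with pmf `f`, `p̂` is their empirical distribution, and
`0 ≤ δ ≤ H(q‖f)`, then `Pr(H(p̂‖q) ≤ δ) ≤ (M+1)^{|α|} · exp(−2M(H(q‖f) − δ)²)`. -/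
theorem prob_hellinger_emp_le {α : Type*} [Fintype α] [DecidableEq α]
    (f q : α → ℝ) (hf : IsPmf f) (hq : IsPmf q) (M : ℕ) (hM : 1 ≤ M)
    (δ : ℝ) (hδ0 : 0 ≤ δ) (hδ : δ ≤ hellinger q f) :
    (∑ x : Fin M → α,
        Set.indicator {x : Fin M → α | hellinger (empDist x) q ≤ δ}
          (fun x => ∏ i, f (x i)) x) ≤
      ((M : ℝ) + 1) ^ (Fintype.card α) *
        Real.exp (-2 * M * (hellinger q f - δ) ^ 2) :=
  prob_hellinger_emp_le_general f q hf M hM δ hδ
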